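/- There exist infinitely many pairwise nonequivalent perfect colorings of H with parameter matrix [[0,3],[1,2]]; that is, the set of perfect colorings of H with this parameter matrix has infinitely many equivalence classes under graph automorphisms of H. -/

import Mathlib

/-!
Coordinates identify `G` with `ℤ² ⋊ C₂`, so that a vertex is `(a, b, side)`. A perfect coloring
with matrix `[[0,3],[1,2]]` is the same as a perfect code (the color-`0` class): every vertex has
exactly one code vertex in its closed neighbourhood. Choosing in every odd column `a` one of the two
alternating patterns, with phase `c a ∈ ZMod 2`, gives such a code for every `c : ℤ → ZMod 2`.

The invariant that separates these codes is the number of code vertices at distance `4` from a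
code vertex in column `a`, namely `4 + [c (a - 2) = c a] + [c (a + 2) = c a]`. Distances are
bounded below by three height functions that change by exactly one along every edge, and above by
explicit words. For the phase sequence equal to `1` exactly at column `1` and at the columns
`≥ 2n + 13`, the code vertices where the count is `4` form column `1`, and those where it is `5`
with no such vertex at distance `4` lie in columns `2n + 11` and `2n + 13`. The distances between
the two kinds of vertices are at least `4n + 19`, and `4n + 20` occurs, which determines `n`.
-/

namespace HexGrid

/-- Relations of the hexagonal grid group: x² = y² = z² = (x·y·z)² = 1. -/
def hexRels : Set (FreeGroup (Fin 3)) :=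
  {FreeGroup.of 0 * FreeGroup.of 0,
   FreeGroup.of 1 * FreeGroup.of 1,
   FreeGroup.of 2 * FreeGroup.of 2,
   FreeGroup.of 0 * FreeGroup.of 1 * FreeGroup.of 2 *
     (FreeGroup.of 0 * FreeGroup.of 1 * FreeGroup.of 2)}

/-- The group `G = ⟨x, y, z ∣ x² = y² = z² = (x·y·z)² = 1⟩`. -/
abbrev G := PresentedGroup hexRels

/-- The generators of `G`. -/
def gen (i : Fin 3) : G := PresentedGroup.of i

def x : G := gen 0
def y : G := gen 1
def z : G := gen 2

lemma gen_mul_self (i : Fin 3) : gen i * gen i = 1 := by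
  have h : FreeGroup.of i * FreeGroup.of i ∈ Subgroup.normalClosure hexRels :=
    Subgroup.subset_normalClosure (by fin_cases i <;> simp [hexRels])
  exact (QuotientGroup.eq_one_iff _).mpr h

/-- The infinite hexagonal grid `H`: the Cayley graph of `G` with respect to `{x, y, z}`;
`u` and `v` are adjacent iff `v ∈ {u·x, u·y, u·z}`. -/
def H : SimpleGraph G where
  Adj u v := u ≠ v ∧ ∃ i : Fin 3, v = u * gen i
  symm := by
    constructor
    rintro u v ⟨hne, i, rfl⟩
    exact ⟨hne.symm, i, by rw [mul_assoc, gen_mul_self, mul_one]⟩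
  loopless := by constructor; rintro u ⟨hne, -⟩; exact hne rfl

/-- `φ` is a perfect coloring of `H` with parameter matrix `A`: for every vertex `u` and
every color `j`, the number of neighbors of `u` in `H` colored `j` equals `A (φ u) j`. -/
def IsPerfectColoring {k : ℕ} (φ : G → Fin k) (A : Matrix (Fin k) (Fin k) ℕ) : Prop :=
  ∀ u : G, ∀ j : Fin k, Set.ncard {v : G | H.Adj u v ∧ φ v = j} = A (φ u) j

/-- A matrix is tridiagonal if its entries vanish whenever the indices differ by more
than one. -/
def IsTridiagonal {k : ℕ} (A : Matrix (Fin k) (Fin k) ℕ) : Prop :=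
  ∀ i j : Fin k, ((i : ℕ) + 1 < (j : ℕ) ∨ (j : ℕ) + 1 < (i : ℕ)) → A i j = 0

/-- Two colorings are equivalent if one is obtained from the other by composing with a
graph automorphism of `H`. -/
def EquivColoring {k : ℕ} (φ ψ : G → Fin k) : Prop :=
  ∃ g : H ≃g H, ψ = fun v => φ (g v)

end HexGrid

namespace SimpleGraph

variable {V W : Type*} {Γ : SimpleGraph V} {Γ' : SimpleGraph W}

lemma Reachable.dist_map_le (f : Γ →g Γ') {u v : V} (h : Γ.Reachable u v) :
    Γ'.dist (f u) (f v) ≤ Γ.dist u v := by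
  obtain ⟨p, hp⟩ := h.exists_walk_length_eq_dist
  exact hp ▸ (dist_le (p.map f)).trans_eq (p.length_map f)

lemma Iso.dist_eq (φ : Γ ≃g Γ') (u v : V) : Γ'.dist (φ u) (φ v) = Γ.dist u v := by
  by_cases h : Γ.Reachable u v
  · refine le_antisymm (h.dist_map_le φ.toHom) ?_
    simpa using (Iso.reachable_iff (φ := φ) |>.mpr h).dist_map_le φ.symm.toHom
  · rw [dist_eq_zero_of_not_reachable h, dist_eq_zero_of_not_reachable (mt Iso.reachable_iff.mp h)]

section Height

variable {f : V → ℤ}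

lemma Walk.abs_sub_le_length (hf : ∀ ⦃u v⦄, Γ.Adj u v → |f v - f u| ≤ 1) {u v : V}
    (p : Γ.Walk u v) : |f v - f u| ≤ p.length := by
  induction p with
  | nil => simp
  | cons h _ ih =>
    have := hf h
    rw [abs_le] at *
    push_cast [length_cons]
    omega

lemma Walk.length_modEq (hf : ∀ ⦃u v⦄, Γ.Adj u v → |f v - f u| = 1) {u v : V}
    (p : Γ.Walk u v) : (p.length : ℤ) ≡ f v - f u [ZMOD 2] := by
  induction p with
  | nil => simp [Int.ModEq]
  | cons h _ ih =>
    have := abs_eq (zero_le_one' ℤ) |>.mp (hf h)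
    simp only [Int.ModEq, length_cons] at *
    omega

lemma Connected.abs_sub_le_dist (hΓ : Γ.Connected) (hf : ∀ ⦃u v⦄, Γ.Adj u v → |f v - f u| ≤ 1)
    (u v : V) : |f v - f u| ≤ Γ.dist u v := by
  obtain ⟨p, hp⟩ := hΓ.exists_walk_length_eq_dist u v
  exact hp ▸ p.abs_sub_le_length hf

lemma Connected.dist_modEq (hΓ : Γ.Connected) (hf : ∀ ⦃u v⦄, Γ.Adj u v → |f v - f u| = 1)
    (u v : V) : (Γ.dist u v : ℤ) ≡ f v - f u [ZMOD 2] := by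
  obtain ⟨p, hp⟩ := hΓ.exists_walk_length_eq_dist u v
  exact hp ▸ p.length_modEq hf

end Height

section Defects

variable (Γ) (φ : V → Fin 2)

/-- For a perfect code of the hexagonal grid this is `6` at a generic code vertex; the defects
below are the code vertices where it drops. -/
noncomputable def codeSphereCard (v : V) : ℕ := {w | φ w = 0 ∧ Γ.dist v w = 4}.ncard

def IsDoubleDefect (u : V) : Prop := φ u = 0 ∧ codeSphereCard Γ φ u = 4

def IsRemoteDefect (v : V) : Prop :=
  φ v = 0 ∧ codeSphereCard Γ φ v = 5 ∧ ∀ w, Γ.dist v w = 4 → ¬ IsDoubleDefect Γ φ w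

def defectDistances : Set ℕ :=
  {d | ∃ u v, IsDoubleDefect Γ φ u ∧ IsRemoteDefect Γ φ v ∧ Γ.dist u v = d}

variable {Γ}

lemma Iso.codeSphereCard_comp (g : Γ ≃g Γ') (φ : W → Fin 2) (v : V) :
    codeSphereCard Γ (φ ∘ g) v = codeSphereCard Γ' φ (g v) := by
  have : {w | (φ ∘ g) w = 0 ∧ Γ.dist v w = 4} = g ⁻¹' {w | φ w = 0 ∧ Γ'.dist (g v) w = 4} := by
    ext w; simp [g.dist_eq]
  rw [codeSphereCard, this, Set.ncard_preimage_of_injective_subset_range g.injective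
    (by simp [g.surjective.range_eq])]
  rfl

lemma Iso.isDoubleDefect_comp_iff (g : Γ ≃g Γ') (φ : W → Fin 2) (v : V) :
    IsDoubleDefect Γ (φ ∘ g) v ↔ IsDoubleDefect Γ' φ (g v) := by
  simp [IsDoubleDefect, g.codeSphereCard_comp]

lemma Iso.isRemoteDefect_comp_iff (g : Γ ≃g Γ') (φ : W → Fin 2) (v : V) :
    IsRemoteDefect Γ (φ ∘ g) v ↔ IsRemoteDefect Γ' φ (g v) := by
  simp only [IsRemoteDefect, g.isDoubleDefect_comp_iff, g.codeSphereCard_comp, Function.comp_apply,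
    g.surjective.forall, g.dist_eq]

lemma Iso.defectDistances_comp (g : Γ ≃g Γ') (φ : W → Fin 2) :
    defectDistances Γ (φ ∘ g) = defectDistances Γ' φ := by
  ext d
  simp only [defectDistances, Set.mem_ofPred_eq, g.isDoubleDefect_comp_iff,
    g.isRemoteDefect_comp_iff, ← g.dist_eq]
  exact ⟨fun ⟨u, v, h⟩ => ⟨g u, g v, h⟩,
    fun ⟨u, v, h⟩ => ⟨g.symm u, g.symm v, by simpa using h⟩⟩

end Defects

end SimpleGraph

namespace HexGrid

open Finset SimpleGraph

/-- Coordinates `(a, b, side)` on the hexagonal grid: the group `ℤ² ⋊ C₂`, where the nontrivial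
element of `C₂` acts on `ℤ²` by negation. -/
@[ext] structure Coord where
  a : ℤ
  b : ℤ
  side : Bool

namespace Coord

instance : Mul Coord :=
  ⟨fun r s => ⟨r.a + (if r.side then -s.a else s.a), r.b + (if r.side then -s.b else s.b),
    xor r.side s.side⟩⟩

instance : One Coord := ⟨⟨0, 0, false⟩⟩

instance : Inv Coord :=
  ⟨fun r => ⟨if r.side then r.a else -r.a, if r.side then r.b else -r.b, r.side⟩⟩

lemma mul_def (r s : Coord) :
    r * s = ⟨r.a + (if r.side then -s.a else s.a), r.b + (if r.side then -s.b else s.b),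
      xor r.side s.side⟩ := rfl

@[simp] lemma mk_mul_mk (a b a' b' : ℤ) (e e' : Bool) :
    (⟨a, b, e⟩ * ⟨a', b', e'⟩ : Coord) =
      ⟨a + (if e then -a' else a'), b + (if e then -b' else b'), xor e e'⟩ := rfl

@[simp] lemma one_def : (1 : Coord) = ⟨0, 0, false⟩ := rfl

@[simp] lemma inv_mk (a b : ℤ) (e : Bool) :
    (⟨a, b, e⟩ : Coord)⁻¹ = ⟨if e then a else -a, if e then b else -b, e⟩ := rfl

instance : Group Coord where
  mul_assoc := by
    rintro ⟨_, _, _ | _⟩ ⟨_, _, _ | _⟩ ⟨_, _, _ | _⟩ <;> simp <;> ring_nf <;> simp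
  one_mul := by rintro ⟨_, _, _⟩; simp
  mul_one := by rintro ⟨_, _, _ | _⟩ <;> simp
  inv_mul_cancel := by rintro ⟨_, _, _ | _⟩ <;> simp

lemma mk_pow (a b : ℤ) (n : ℕ) : (⟨a, b, false⟩ : Coord) ^ n = ⟨n * a, n * b, false⟩ := by
  induction n with
  | zero => simp
  | succ n ih => rw [pow_succ, ih]; ext <;> simp <;> ring

lemma mk_zpow (a b n : ℤ) : (⟨a, b, false⟩ : Coord) ^ n = ⟨n * a, n * b, false⟩ := by
  cases n with
  | ofNat n => simpa using mk_pow a b n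
  | negSucc n => rw [zpow_negSucc, mk_pow]; ext <;> simp [Int.negSucc_eq] <;> ring

end Coord

def coordGen : Fin 3 → Coord
  | 0 => ⟨0, 0, true⟩
  | 1 => ⟨-1, 0, true⟩
  | 2 => ⟨-1, -1, true⟩

lemma coordGen_rels : ∀ r ∈ hexRels, FreeGroup.lift coordGen r = 1 := by
  rintro r (rfl | rfl | rfl | rfl) <;> simp [coordGen]

def coord : G →* Coord := PresentedGroup.toGroup coordGen_rels

@[simp] lemma coord_gen (i : Fin 3) : coord (gen i) = coordGen i :=
  PresentedGroup.toGroup.of coordGen_rels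

lemma coord_prod_map_gen (l : List (Fin 3)) : coord (l.map gen).prod = (l.map coordGen).prod := by
  simp [map_list_prod, Function.comp_def]

lemma gen_mul_gen_mul (i : Fin 3) (g : G) : gen i * (gen i * g) = g := by
  rw [← mul_assoc, gen_mul_self, one_mul]

lemma gen_inv (i : Fin 3) : (gen i)⁻¹ = gen i := inv_eq_of_mul_eq_one_right (gen_mul_self i)

def t : G := gen 0 * gen 1

def s : G := gen 1 * gen 2

lemma t_mul_s : t * s = gen 0 * gen 2 := by simp only [t, s, mul_assoc, gen_mul_gen_mul]

lemma commute_t_s : Commute t s := by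
  have h : gen 0 * gen 1 * gen 2 * (gen 0 * gen 1 * gen 2) = 1 :=
    PresentedGroup.one_of_mem (by simp [hexRels])
  symm
  calc s * t = gen 0 * (gen 0 * gen 1 * gen 2 * (gen 0 * gen 1 * gen 2)) * gen 2 := by
        simp only [s, t, mul_assoc, gen_mul_gen_mul, gen_mul_self, mul_one]
    _ = t * s := by rw [h, mul_one, t_mul_s]

def ofCoord (r : Coord) : G := t ^ r.a * s ^ r.b * if r.side then gen 0 else 1

lemma ofCoord_mul_coordGen (r : Coord) (i : Fin 3) :
    ofCoord (r * coordGen i) = ofCoord r * gen i := by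
  have hts (b : ℤ) : Commute t (s ^ b) := commute_t_s.zpow_right b
  obtain ⟨a, b, _ | _⟩ := r <;> fin_cases i <;> simp [ofCoord, coordGen, zpow_add, mul_assoc]
  · rw [← mul_assoc, (hts b).inv_left.eq, mul_assoc]
    simp [t, mul_inv_rev, gen_inv, mul_assoc, gen_mul_self]
  · rw [← mul_assoc, (hts b).inv_left.eq, mul_assoc, ← mul_assoc t⁻¹, ← mul_inv_rev,
      ← commute_t_s.eq, t_mul_s]
    simp [mul_inv_rev, gen_inv, mul_assoc, gen_mul_self]
  · exact gen_mul_self 0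
  · exact (hts b).eq
  · rw [← mul_assoc, (hts b).eq, mul_assoc, t_mul_s]

@[elab_as_elim]
lemma induction_mul_gen {p : G → Prop} (one : p 1) (mul_gen : ∀ g i, p g → p (g * gen i))
    (g : G) : p g := by
  have hg : g ∈ Subgroup.closure (Set.range gen) := by
    rw [show gen = PresentedGroup.of from rfl, PresentedGroup.closure_range_of]; trivial
  induction hg using Subgroup.closure_induction_right with
  | one => exact one
  | mul_right g _ _ hy ih =>
    obtain ⟨i, rfl⟩ := hy
    exact mul_gen g i ih
  | mul_inv_cancel g _ _ hy ih =>
    obtain ⟨i, rfl⟩ := hy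
    exact gen_inv i ▸ mul_gen g i ih

lemma ofCoord_coord (g : G) : ofCoord (coord g) = g := by
  induction g using induction_mul_gen with
  | one => simp [ofCoord]
  | mul_gen g i ih => rw [map_mul, coord_gen, ofCoord_mul_coordGen, ih]

lemma coord_t : coord t = ⟨1, 0, false⟩ := by simp [t, coordGen]

lemma coord_s : coord s = ⟨0, 1, false⟩ := by simp [s, coordGen]

lemma coord_ofCoord (r : Coord) : coord (ofCoord r) = r := by
  obtain ⟨a, b, _ | _⟩ := r <;> simp [ofCoord, coord_t, coord_s, Coord.mk_zpow, coordGen]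

lemma coord_injective : Function.Injective coord :=
  Function.LeftInverse.injective ofCoord_coord

lemma gen_injective : Function.Injective gen := by
  intro i j h
  replace h := congrArg coord h
  fin_cases i <;> fin_cases j <;> simp_all [coordGen]

lemma gen_ne_one (i : Fin 3) : gen i ≠ 1 := by
  intro h
  replace h := congrArg coord h
  fin_cases i <;> simp_all [coordGen]

lemma adj_iff {u v : G} : H.Adj u v ↔ ∃ i, v = u * gen i :=
  ⟨fun h => h.2, fun ⟨i, h⟩ => ⟨by simpa [h] using gen_ne_one i, i, h⟩⟩

lemma adj_mul_gen (u : G) (i : Fin 3) : H.Adj u (u * gen i) := adj_iff.mpr ⟨i, rfl⟩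

lemma H_connected : H.Connected := by
  suffices h : ∀ g, H.Reachable 1 g from ⟨fun u v => (h u).symm.trans (h v)⟩
  intro g
  induction g using induction_mul_gen with
  | one => rfl
  | mul_gen g i ih => exact ih.trans (adj_mul_gen g i).reachable

lemma dist_mul_prod_le (u : G) (l : List (Fin 3)) :
    H.dist u (u * (l.map gen).prod) ≤ l.length := by
  induction l generalizing u with
  | nil => simp
  | cons i l ih =>
    calc H.dist u (u * ((i :: l).map gen).prod)
        ≤ H.dist u (u * gen i) + H.dist (u * gen i) (u * gen i * (l.map gen).prod) := by
          simpa [mul_assoc] using H_connected.dist_triangle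
      _ ≤ 1 + l.length := by
          gcongr
          · exact (dist_eq_one_iff_adj.mpr (adj_mul_gen u i)).le
          · exact ih _
      _ = (i :: l).length := by simp [add_comm]

lemma dist_mul_t_pow_le (u : G) (k : ℕ) : H.dist u (u * t ^ k) ≤ 2 * k := by
  induction k with
  | zero => simp
  | succ k ih =>
    calc H.dist u (u * t ^ (k + 1))
        ≤ H.dist u (u * t ^ k) + H.dist (u * t ^ k) (u * t ^ k * ([0, 1].map gen).prod) := by
          simpa [pow_succ, t, mul_assoc] using H_connected.dist_triangle
      _ ≤ 2 * k + 2 := add_le_add ih (dist_mul_prod_le _ _)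
      _ = 2 * (k + 1) := by ring

lemma ncard_adj_eq_card {α : Type*} [DecidableEq α] (φ : G → α) (u : G) (j : α) :
    {v | H.Adj u v ∧ φ v = j}.ncard = #{i | φ (u * gen i) = j} := by
  have : {v | H.Adj u v ∧ φ v = j} = (fun i => u * gen i) '' {i | φ (u * gen i) = j} := by
    ext v
    simp only [adj_iff, Set.mem_ofPred_eq, Set.mem_image]
    constructor
    · rintro ⟨⟨i, rfl⟩, hj⟩; exact ⟨i, hj, rfl⟩
    · rintro ⟨i, hj, rfl⟩; exact ⟨⟨i, rfl⟩, hj⟩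
  rw [this, Set.ncard_image_of_injective _ fun i j h => gen_injective (mul_left_cancel h),
    Set.ncard_eq_toFinset_card']
  simp

def height (p q : ℤ) (r : Coord) : ℤ := 2 * (p * r.a + q * r.b) + if r.side then 1 else 0

/-- The three directions in which `height` is a level function of the grid: it changes by
exactly one along every edge. -/
def heightDirs : Finset (ℤ × ℤ) := {(1, 0), (0, 1), (1, -1)}

lemma abs_height_mul_coordGen {p q : ℤ} (hpq : (p, q) ∈ heightDirs) (r : Coord) (i : Fin 3) :
    |height p q (r * coordGen i) - height p q r| = 1 := by
  simp only [heightDirs, mem_insert, mem_singleton, Prod.mk.injEq] at hpq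
  obtain ⟨a, b, _ | _⟩ := r <;> fin_cases i <;>
    rcases hpq with ⟨rfl, rfl⟩ | ⟨rfl, rfl⟩ | ⟨rfl, rfl⟩ <;>
    simp [height, coordGen] <;> ring_nf <;> simp

lemma abs_height_adj {p q : ℤ} (hpq : (p, q) ∈ heightDirs) {u v : G} (h : H.Adj u v) :
    |height p q (coord v) - height p q (coord u)| = 1 := by
  obtain ⟨i, rfl⟩ := adj_iff.mp h
  simpa using abs_height_mul_coordGen hpq (coord u) i

lemma abs_height_sub_le_dist {p q : ℤ} (hpq : (p, q) ∈ heightDirs) (u v : G) :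
    |height p q (coord v) - height p q (coord u)| ≤ H.dist u v :=
  H_connected.abs_sub_le_dist (fun _ _ h => (abs_height_adj hpq h).le) u v

lemma dist_modEq_height (u v : G) :
    (H.dist u v : ℤ) ≡ height 1 0 (coord v) - height 1 0 (coord u) [ZMOD 2] :=
  H_connected.dist_modEq (fun _ _ h => abs_height_adj (by simp [heightDirs]) h) u v

lemma two_mul_sub_le_dist (u v : G) : 2 * ((coord v).a - (coord u).a) - 1 ≤ H.dist u v := by
  have := abs_height_sub_le_dist (p := 1) (q := 0) (by simp [heightDirs]) u v
  simp only [height, abs_le] at this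
  split_ifs at this <;> omega

/-- In each odd column `a` the code contains one endpoint of every `gen 0`-edge, alternating
along the column with phase `c a`; even columns contain no code vertex. -/
def IsCode (c : ℤ → ZMod 2) (r : Coord) : Prop :=
  Odd r.a ∧ (r.b : ZMod 2) + (if r.side then 1 else 0) = c r.a

instance (c : ℤ → ZMod 2) : DecidablePred (IsCode c) := fun _ => by
  unfold IsCode; infer_instance

def codeColoring (c : ℤ → ZMod 2) (g : G) : Fin 2 := if IsCode c (coord g) then 0 else 1

lemma codeColoring_eq_zero_iff {c : ℤ → ZMod 2} {g : G} :
    codeColoring c g = 0 ↔ IsCode c (coord g) := by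
  unfold codeColoring; split_ifs <;> simp_all

lemma card_isCode_mul_coordGen (c : ℤ → ZMod 2) (r : Coord) :
    #{i | IsCode c (r * coordGen i)} = if IsCode c r then 0 else 1 := by
  rw [card_filter, Fin.sum_univ_three]
  obtain ⟨a, b, _ | _⟩ := r <;> by_cases ha : Odd a <;>
    simp [coordGen, IsCode, ha, odd_add_one, odd_sub_one, ← sub_eq_add_neg,
      ← Int.not_odd_iff_even] <;>
    generalize (b : ZMod 2) = β <;> generalize c _ = γ <;> revert β γ <;> decide

theorem isPerfectColoring_codeColoring (c : ℤ → ZMod 2) :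
    IsPerfectColoring (codeColoring c) !![0, 3; 1, 2] := by
  intro u j
  have h0 : #{i | codeColoring c (u * gen i) = 0} = if IsCode c (coord u) then 0 else 1 := by
    simpa [codeColoring_eq_zero_iff] using card_isCode_mul_coordGen c (coord u)
  have hsplit := card_filter_add_card_filter_not (s := univ)
    fun i : Fin 3 => codeColoring c (u * gen i) = 0
  rw [ncard_adj_eq_card]
  fin_cases j <;> by_cases hu : IsCode c (coord u) <;> simp_all [codeColoring]
  omega

/-- The coordinate offsets `(Δa, Δb)` with `Δa` even of the vertices at distance `4` on the
same side. -/
def sphereOffsets : Finset (ℤ × ℤ) :=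
  {(0, 2), (0, -2), (2, 0), (2, 1), (2, 2), (-2, 0), (-2, -1), (-2, -2)}

lemma neg_mem_sphereOffsets {o : ℤ × ℤ} (ho : o ∈ sphereOffsets) : -o ∈ sphereOffsets := by
  fin_cases ho <;> decide

lemma exists_word_of_mem_sphereOffsets {o : ℤ × ℤ} (ho : o ∈ sphereOffsets) :
    ∃ l : List (Fin 3), l.length = 4 ∧ (l.map coordGen).prod = ⟨o.1, o.2, false⟩ := by
  fin_cases ho
  exacts [⟨[1, 2, 1, 2], rfl, rfl⟩, ⟨[2, 1, 2, 1], rfl, rfl⟩, ⟨[0, 1, 0, 1], rfl, rfl⟩,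
    ⟨[0, 1, 0, 2], rfl, rfl⟩, ⟨[0, 2, 0, 2], rfl, rfl⟩, ⟨[1, 0, 1, 0], rfl, rfl⟩,
    ⟨[1, 0, 2, 0], rfl, rfl⟩, ⟨[2, 0, 2, 0], rfl, rfl⟩]

lemma card_filter_sphereOffsets (f : ℤ → ZMod 2) :
    #{o ∈ sphereOffsets | (o.2 : ZMod 2) = f o.1 - f 0} =
      4 + (if f (-2) = f 0 then 1 else 0) + (if f 2 = f 0 then 1 else 0) := by
  have key : ∀ β γ : ZMod 2, #{o ∈ sphereOffsets |
      (o.2 : ZMod 2) = if o.1 = 2 then β else if o.1 = -2 then γ else 0} =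
        4 + (if γ = 0 then 1 else 0) + (if β = 0 then 1 else 0) := by decide
  have h := key (f 2 - f 0) (f (-2) - f 0)
  simp only [sub_eq_zero] at h
  rw [← h]
  refine congrArg card (filter_congr fun o ho => ?_)
  fin_cases ho <;> simp

def offset (u : G) (o : ℤ × ℤ) : G :=
  ofCoord ⟨(coord u).a + o.1, (coord u).b + o.2, (coord u).side⟩

@[simp] lemma coord_offset (u : G) (o : ℤ × ℤ) :
    coord (offset u o) = ⟨(coord u).a + o.1, (coord u).b + o.2, (coord u).side⟩ :=
  coord_ofCoord _

lemma offset_injective (u : G) : Function.Injective (offset u) := by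
  intro o o' h
  have := congrArg coord h
  simp only [coord_offset, Coord.mk.injEq, add_right_inj] at this
  exact Prod.ext this.1 this.2.1

lemma dist_offset {o : ℤ × ℤ} (ho : o ∈ sphereOffsets) (u : G) : H.dist u (offset u o) = 4 := by
  apply le_antisymm
  · suffices ∃ l : List (Fin 3), l.length = 4 ∧ offset u o = u * (l.map gen).prod by
      obtain ⟨l, hl, h⟩ := this
      exact h ▸ hl ▸ dist_mul_prod_le u l
    cases hside : (coord u).side
    · obtain ⟨l, hl, hprod⟩ := exists_word_of_mem_sphereOffsets ho
      refine ⟨l, hl, coord_injective ?_⟩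
      rw [map_mul, coord_prod_map_gen, hprod, Coord.mul_def]
      simp [hside]
    · obtain ⟨l, hl, hprod⟩ := exists_word_of_mem_sphereOffsets (neg_mem_sphereOffsets ho)
      refine ⟨l, hl, coord_injective ?_⟩
      rw [map_mul, coord_prod_map_gen, hprod, Coord.mul_def]
      simp [hside]
  · have h1 := abs_height_sub_le_dist (p := 1) (q := 0) (by simp [heightDirs]) u (offset u o)
    have h2 := abs_height_sub_le_dist (p := 0) (q := 1) (by simp [heightDirs]) u (offset u o)
    simp only [height, coord_offset] at h1 h2
    fin_cases ho <;> simp [abs_le] at h1 h2 <;> omega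

lemma side_eq_of_dist_eq_four {u w : G} (h : H.dist u w = 4) :
    (coord w).side = (coord u).side := by
  have := dist_modEq_height u w
  rw [h] at this
  simp only [height, Int.ModEq] at this
  cases hu : (coord u).side <;> cases hw : (coord w).side <;> simp [hu, hw] at this ⊢

lemma isCode_offset_iff {c : ℤ → ZMod 2} {u : G} (hu : IsCode c (coord u)) {o : ℤ × ℤ}
    (ho : Even o.1) :
    IsCode c (coord (offset u o)) ↔ (o.2 : ZMod 2) = c ((coord u).a + o.1) - c (coord u).a := by
  obtain ⟨ha, hb⟩ := hu
  simp only [IsCode, coord_offset, ha.add_even ho, true_and, Int.cast_add]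
  constructor <;> intro h
  · linear_combination h - hb
  · linear_combination h + hb

lemma mem_sphereOffsets_of_abs_le {p q : ℤ} (hp : Even p) (h₁ : |p| ≤ 2) (h₂ : |q| ≤ 2)
    (h₃ : |p - q| ≤ 2) (h₀ : p = 0 → Even q ∧ q ≠ 0) : (p, q) ∈ sphereOffsets := by
  obtain ⟨h₁, h₁'⟩ := abs_le.mp h₁
  obtain ⟨h₂, h₂'⟩ := abs_le.mp h₂
  rw [abs_le] at h₃
  rw [Int.even_iff] at hp
  simp only [Int.even_iff] at h₀
  interval_cases p <;> interval_cases q <;> simp_all [sphereOffsets]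

lemma exists_offset_of_dist_eq_four {c : ℤ → ZMod 2} {u w : G} (hu : IsCode c (coord u))
    (hw : IsCode c (coord w)) (h : H.dist u w = 4) :
    ∃ o ∈ sphereOffsets, w = offset u o := by
  set p := (coord w).a - (coord u).a
  set q := (coord w).b - (coord u).b
  have hside := side_eq_of_dist_eq_four h
  have hwo : w = offset u (p, q) := coord_injective (by ext <;> simp [p, q, hside])
  have hheight {p' q' : ℤ} (hd : (p', q') ∈ heightDirs) : |2 * (p' * p + q' * q)| ≤ 4 := by
    have := abs_height_sub_le_dist hd u w
    rw [h, Nat.cast_ofNat] at this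
    convert this using 2
    simp only [height, hside, p, q]
    ring
  have h₁ := hheight (p' := 1) (q' := 0) (by simp [heightDirs])
  have h₂ := hheight (p' := 0) (q' := 1) (by simp [heightDirs])
  have h₃ := hheight (p' := 1) (q' := -1) (by simp [heightDirs])
  simp only [abs_le] at h₁ h₂ h₃
  refine ⟨(p, q), mem_sphereOffsets_of_abs_le (hw.1.sub_odd hu.1) (abs_le.mpr (by omega))
    (abs_le.mpr (by omega)) (abs_le.mpr (by omega)) fun hp => ⟨?_, fun hq => ?_⟩, hwo⟩
  · have := (isCode_offset_iff hu (by simp [hp])).mp (hwo ▸ hw)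
    simpa [hp, ZMod.intCast_eq_zero_iff_even] using this
  · rw [hwo, hp, hq, show offset u (0, 0) = u from coord_injective (by simp)] at h
    simp at h

lemma even_fst_of_mem_sphereOffsets {o : ℤ × ℤ} (ho : o ∈ sphereOffsets) : Even o.1 := by
  fin_cases ho <;> decide

lemma codeSphere_eq_image {c : ℤ → ZMod 2} {u : G} (hu : IsCode c (coord u)) :
    {w | codeColoring c w = 0 ∧ H.dist u w = 4} = offset u ''
      {o | o ∈ sphereOffsets ∧ (o.2 : ZMod 2) = c ((coord u).a + o.1) - c (coord u).a} := by
  ext w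
  simp only [codeColoring_eq_zero_iff, Set.mem_ofPred_eq, Set.mem_image]
  constructor
  · rintro ⟨hw, h⟩
    obtain ⟨o, ho, rfl⟩ := exists_offset_of_dist_eq_four hu hw h
    exact ⟨o, ⟨ho, (isCode_offset_iff hu (even_fst_of_mem_sphereOffsets ho)).mp hw⟩, rfl⟩
  · rintro ⟨o, ⟨ho, hP⟩, rfl⟩
    exact ⟨(isCode_offset_iff hu (even_fst_of_mem_sphereOffsets ho)).mpr hP, dist_offset ho u⟩

lemma codeSphereCard_codeColoring {c : ℤ → ZMod 2} {u : G} (hu : IsCode c (coord u)) :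
    codeSphereCard H (codeColoring c) u = 4 + (if c ((coord u).a - 2) = c (coord u).a then 1 else 0)
      + (if c ((coord u).a + 2) = c (coord u).a then 1 else 0) := by
  rw [codeSphereCard, codeSphere_eq_image hu, Set.ncard_image_of_injective _ (offset_injective u),
    ← coe_filter, Set.ncard_coe_finset]
  simpa [sub_eq_add_neg] using card_filter_sphereOffsets fun d => c ((coord u).a + d)

lemma exists_isCode_dist_eq_four {c : ℤ → ZMod 2} {u : G} (hu : IsCode c (coord u)) {d : ℤ}
    (hd : d = 2 ∨ d = -2) :
    ∃ w, IsCode c (coord w) ∧ H.dist u w = 4 ∧ (coord w).a = (coord u).a + d := by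
  obtain ⟨q, hq, hP⟩ : ∃ q : ℤ, (d, q) ∈ sphereOffsets ∧
      (q : ZMod 2) = c ((coord u).a + d) - c (coord u).a := by
    generalize c _ - c _ = β
    obtain rfl | rfl := (by decide : ∀ β : ZMod 2, β = 0 ∨ β = 1) β <;> rcases hd with rfl | rfl
    exacts [⟨0, by decide, by simp⟩, ⟨0, by decide, by simp⟩, ⟨1, by decide, by simp⟩,
      ⟨-1, by decide, by simp⟩]
  exact ⟨offset u (d, q), (isCode_offset_iff hu (even_fst_of_mem_sphereOffsets hq)).mpr hP,
    dist_offset hq u, by simp⟩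

def boundarySeq (n : ℕ) (a : ℤ) : ZMod 2 := if a = 1 ∨ 2 * n + 13 ≤ a then 1 else 0

variable {n : ℕ}

local notation "φ " n => codeColoring (boundarySeq n)

lemma codeSphereCard_boundarySeq {u : G} (hu : IsCode (boundarySeq n) (coord u)) :
    codeSphereCard H (φ n) u =
      4 + (if (coord u).a = 1 ∨ (coord u).a = 3 ∨ (coord u).a = 2 * n + 13 then 0 else 1)
        + (if (coord u).a = -1 ∨ (coord u).a = 1 ∨ (coord u).a = 2 * n + 11 then 0 else 1) := by
  have ha := Int.odd_iff.mp hu.1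
  rw [codeSphereCard_codeColoring hu]
  unfold boundarySeq
  split_ifs <;> simp_all <;> omega

lemma coord_a_eq_one_of_isDoubleDefect {u : G} (h : IsDoubleDefect H (φ n) u) :
    (coord u).a = 1 := by
  obtain ⟨hu, h4⟩ := h
  rw [codeColoring_eq_zero_iff] at hu
  rw [codeSphereCard_boundarySeq hu] at h4
  split_ifs at h4 <;> omega

lemma isDoubleDefect_of_coord_a_eq_one {u : G} (hu : IsCode (boundarySeq n) (coord u))
    (ha : (coord u).a = 1) : IsDoubleDefect H (φ n) u :=
  ⟨codeColoring_eq_zero_iff.mpr hu, by rw [codeSphereCard_boundarySeq hu, ha]; simp⟩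

lemma coord_a_of_isRemoteDefect {v : G} (h : IsRemoteDefect H (φ n) v) :
    (coord v).a = 2 * n + 11 ∨ (coord v).a = 2 * n + 13 := by
  obtain ⟨hv, h5, hfar⟩ := h
  rw [codeColoring_eq_zero_iff] at hv
  rw [codeSphereCard_boundarySeq hv] at h5
  have hnear : (coord v).a ≠ -1 ∧ (coord v).a ≠ 3 := by
    constructor <;> intro ha
    · obtain ⟨w, hw, hd, hwa⟩ := exists_isCode_dist_eq_four hv (d := 2) (by simp)
      exact hfar w hd (isDoubleDefect_of_coord_a_eq_one hw (by omega))
    · obtain ⟨w, hw, hd, hwa⟩ := exists_isCode_dist_eq_four hv (d := -2) (by simp)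
      exact hfar w hd (isDoubleDefect_of_coord_a_eq_one hw (by omega))
  split_ifs at h5 <;> omega

lemma isRemoteDefect_of_coord_a_eq {v : G} (hv : IsCode (boundarySeq n) (coord v))
    (ha : (coord v).a = 2 * n + 11) : IsRemoteDefect H (φ n) v := by
  refine ⟨codeColoring_eq_zero_iff.mpr hv, ?_, fun w hd hw => ?_⟩
  · rw [codeSphereCard_boundarySeq hv, ha]
    split_ifs <;> omega
  · have := two_mul_sub_le_dist w v
    rw [dist_comm, hd, ha, coord_a_eq_one_of_isDoubleDefect hw] at this
    omega

def u₀ : G := ofCoord ⟨1, 1, false⟩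

def v₀ (n : ℕ) : G := ofCoord ⟨2 * n + 11, 2, false⟩

lemma isCode_u₀ : IsCode (boundarySeq n) (coord u₀) := by
  simp [u₀, coord_ofCoord, IsCode, boundarySeq]

lemma isCode_v₀ : IsCode (boundarySeq n) (coord (v₀ n)) := by
  have h : ¬(2 * (n : ℤ) + 11 = 1 ∨ 2 * (n : ℤ) + 13 ≤ 2 * n + 11) := by omega
  refine ⟨⟨n + 5, by simp [v₀, coord_ofCoord]; ring⟩, ?_⟩
  simp only [v₀, coord_ofCoord, boundarySeq, if_neg h]
  decide

lemma dist_u₀_v₀ : H.dist u₀ (v₀ n) = 4 * n + 20 := by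
  apply le_antisymm
  · have hv : v₀ n = u₀ * t ^ (2 * n + 9) * ([0, 2].map gen).prod := coord_injective (by
      rw [map_mul, map_mul, map_pow, coord_t, Coord.mk_pow, coord_prod_map_gen]
      simp [u₀, v₀, coord_ofCoord, coordGen]
      ring)
    calc H.dist u₀ (v₀ n)
        ≤ H.dist u₀ (u₀ * t ^ (2 * n + 9)) + H.dist (u₀ * t ^ (2 * n + 9)) (v₀ n) :=
          H_connected.dist_triangle
      _ ≤ 2 * (2 * n + 9) + 2 := add_le_add (dist_mul_t_pow_le _ _) (hv ▸ dist_mul_prod_le _ _)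
      _ = 4 * n + 20 := by ring
  · have := abs_height_sub_le_dist (p := 1) (q := 0) (by simp [heightDirs]) u₀ (v₀ n)
    simp only [u₀, v₀, coord_ofCoord, height, abs_le] at this ⊢
    omega

lemma mem_defectDistances (n : ℕ) : 4 * n + 20 ∈ defectDistances H (φ n) :=
  ⟨u₀, v₀ n, isDoubleDefect_of_coord_a_eq_one isCode_u₀ (by simp [u₀, coord_ofCoord]),
    isRemoteDefect_of_coord_a_eq isCode_v₀ (by simp [v₀, coord_ofCoord]), dist_u₀_v₀⟩

lemma le_of_mem_defectDistances {d : ℕ} (hd : d ∈ defectDistances H (φ n)) : 4 * n + 19 ≤ d := by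
  obtain ⟨u, v, hu, hv, rfl⟩ := hd
  have := two_mul_sub_le_dist u v
  rw [coord_a_eq_one_of_isDoubleDefect hu] at this
  rcases coord_a_of_isRemoteDefect hv with h | h <;> rw [h] at this <;> omega

/-- There are infinitely many pairwise nonequivalent perfect colorings of `H` with
parameter matrix `[[0,3],[1,2]]`. -/
theorem coloring_03_12_infinitely_many :
    ∃ f : ℕ → (G → Fin 2), (∀ n, IsPerfectColoring (f n) !![0,3;1,2]) ∧
      ∀ m n, m ≠ n → ¬ EquivColoring (f m) (f n) := by
  refine ⟨fun n => φ n, fun n => isPerfectColoring_codeColoring _, ?_⟩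
  rintro m n hmn ⟨g, hg⟩
  have hD : defectDistances H (φ n) = defectDistances H (φ m) := by
    rw [show (φ n) = (φ m) ∘ g from hg, g.defectDistances_comp]
  rcases hmn.lt_or_gt with h | h
  · have := le_of_mem_defectDistances (hD ▸ mem_defectDistances m)
    omega
  · have := le_of_mem_defectDistances (hD ▸ mem_defectDistances n)
    omega

end HexGrid
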